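/- arXiv:1712.05228 — 3 statements merged into one kernel-verified Lean document; each statement's English description precedes it below -/
import Mathlib

section
/- Let d ≥ 1, let Ω ⊆ ℝ^d be open, and let Θ : ℝ^d → ℝ^d be Lipschitz continuous with Lipschitz constant L > 0 and satisfy Θ(x) = 0 for all x ∉ Ω. Then for every τ ∈ ℝ with |τ|·L < 1, the perturbation of the identity F_τ = id + τΘ maps Ω onto Ω, i.e. F_τ(Ω) = Ω. -/
open scoped NNReal

/-- If `Θ : ℝ^d → ℝ^d` is Lipschitz with constant `L > 0` and vanishes
outside the open set `Ω`, then for every `τ` with `|τ| * L < 1` the perturbation of the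
identity `F_τ = id + τ • Θ` maps `Ω` onto `Ω`. -/
theorem perturbation_of_identity_maps_domain_onto_itself
    (d : ℕ) (hd : 1 ≤ d)
    (Ω : Set (EuclideanSpace ℝ (Fin d))) (hΩ : IsOpen Ω)
    (Θ : EuclideanSpace ℝ (Fin d) → EuclideanSpace ℝ (Fin d))
    (L : ℝ≥0) (hL : 0 < L) (hΘ : LipschitzWith L Θ)
    (hsupp : ∀ x ∉ Ω, Θ x = 0)
    (τ : ℝ) (hτ : |τ| * L < 1)
    (F : EuclideanSpace ℝ (Fin d) → EuclideanSpace ℝ (Fin d))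
    (hF : ∀ x, F x = x + τ • Θ x) :
    F '' Ω = Ω := by
  -- F fixes points outside Ω
  have hfix : ∀ z ∉ Ω, F z = z := by
    intro z hz
    rw [hF, hsupp z hz, smul_zero, add_zero]
  -- injectivity
  have hinj : Function.Injective F := by
    intro x y hxy
    by_contra hne
    have hxy' : x - y = τ • Θ y - τ • Θ x := by
      have h := hxy
      rw [hF, hF] at h
      have : x + τ • Θ x - (τ • Θ x + τ • Θ y) = y + τ • Θ y - (τ • Θ x + τ • Θ y) := by
        rw [h]
      calc x - y = (x + τ • Θ x - (τ • Θ x + τ • Θ y)) - (y + τ • Θ y - (τ • Θ x + τ • Θ y))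
              + (τ • Θ y - τ • Θ x) := by abel
        _ = τ • Θ y - τ • Θ x := by rw [this]; abel
    have hd1 := hΘ.dist_le_mul y x
    rw [dist_eq_norm, dist_eq_norm] at hd1
    have h2 : ‖Θ y - Θ x‖ ≤ L * ‖x - y‖ := by
      calc ‖Θ y - Θ x‖ ≤ L * ‖y - x‖ := hd1
        _ = L * ‖x - y‖ := by rw [norm_sub_rev]
    have hnorm : ‖x - y‖ ≤ |τ| * L * ‖x - y‖ := by
      calc ‖x - y‖ = |τ| * ‖Θ y - Θ x‖ := by
            rw [hxy', ← smul_sub, norm_smul, Real.norm_eq_abs]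
        _ ≤ |τ| * (L * ‖x - y‖) := mul_le_mul_of_nonneg_left h2 (abs_nonneg τ)
        _ = |τ| * L * ‖x - y‖ := by ring
    have hpos : 0 < ‖x - y‖ := by
      rw [norm_pos_iff, sub_ne_zero]
      exact hne
    have : ‖x - y‖ < ‖x - y‖ := by
      calc ‖x - y‖ ≤ |τ| * L * ‖x - y‖ := hnorm
        _ < 1 * ‖x - y‖ := by exact mul_lt_mul_of_pos_right hτ hpos
        _ = ‖x - y‖ := one_mul _
    exact lt_irrefl _ this
  -- surjectivity via Banach fixed point
  have hsurj : Function.Surjective F := by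
    intro y
    set g : EuclideanSpace ℝ (Fin d) → EuclideanSpace ℝ (Fin d) :=
      fun x => y - τ • Θ x with hg
    have hglip : LipschitzWith (‖τ‖₊ * L) g := by
      intro a b
      have h1 : edist (g a) (g b) = edist (τ • Θ a) (τ • Θ b) := by
        simp only [hg, edist_sub_left]
      rw [h1]
      calc edist (τ • Θ a) (τ • Θ b) = ‖τ‖₊ * edist (Θ a) (Θ b) := by
            rw [edist_smul₀]; rfl
        _ ≤ ‖τ‖₊ * (L * edist a b) := by
            exact mul_le_mul_right (hΘ a b) _
        _ = ↑(‖τ‖₊ * L) * edist a b := by push_cast; ring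
    have hK : ‖τ‖₊ * L < 1 := by
      rw [← NNReal.coe_lt_coe]
      push_cast
      rwa [Real.norm_eq_abs]
    have hC : ContractingWith (‖τ‖₊ * L) g := ⟨hK, hglip⟩
    refine ⟨hC.fixedPoint g, ?_⟩
    have hfp : g (hC.fixedPoint g) = hC.fixedPoint g := hC.fixedPoint_isFixedPt
    rw [hF]
    nth_rewrite 1 [← hfp]
    simp [hg]
  -- conclude
  apply Set.eq_of_subset_of_subset
  · rintro _ ⟨x, hx, rfl⟩
    by_contra hFx
    have : F (F x) = F x := hfix _ hFx
    have : F x = x := hinj this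
    rw [this] at hFx
    exact hFx hx
  · intro y hy
    obtain ⟨x, rfl⟩ := hsurj y
    refine ⟨x, ?_, rfl⟩
    by_contra hx
    rw [hfix x hx] at hy
    exact hx hy
end

section
/- Let d ≥ 1 and let Θ : ℝ^d → ℝ^d be bounded and Lipschitz continuous with Lipschitz constant L > 0. For |τ|·L < 1, let G_τ : ℝ^d → ℝ^d denote the inverse of the bijection F_τ = id + τΘ. Then for each fixed x ∈ ℝ^d, the map τ ↦ G_τ(x) is differentiable at τ = 0 with derivative −Θ(x); that is, (G_τ(x) − x)/τ → −Θ(x) as τ → 0. -/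
open scoped NNReal

/-- Let `Θ : ℝ^d → ℝ^d` be bounded and Lipschitz with constant `L > 0`, and for
`|τ| * L < 1` let `G_τ` be the inverse of the bijection `F_τ = id + τ • Θ`. Then for each fixed
`x`, the map `τ ↦ G_τ(x)` is differentiable at `τ = 0` with derivative `−Θ(x)`. -/
theorem hasDerivAt_inverse_of_perturbation_of_identity
    (d : ℕ) (hd : 1 ≤ d)
    (Θ : EuclideanSpace ℝ (Fin d) → EuclideanSpace ℝ (Fin d))
    (B : ℝ) (hB : ∀ x, ‖Θ x‖ ≤ B)
    (L : ℝ≥0) (hL : 0 < L) (hΘ : LipschitzWith L Θ)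
    (G : ℝ → EuclideanSpace ℝ (Fin d) → EuclideanSpace ℝ (Fin d))
    (hG : ∀ τ : ℝ, |τ| * L < 1 →
      Function.LeftInverse (G τ) (fun x => x + τ • Θ x) ∧
      Function.RightInverse (G τ) (fun x => x + τ • Θ x))
    (x : EuclideanSpace ℝ (Fin d)) :
    HasDerivAt (fun τ : ℝ => G τ x) (-Θ x) 0 := by
  have hG0 : G 0 x = x := by
    have h := (hG 0 (by simp)).2 x
    simpa using h
  rw [hasDerivAt_iff_tendsto]
  have key : ∀ τ : ℝ, |τ| * L < 1 → G τ x - x = -(τ • Θ (G τ x)) := by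
    intro τ hτ
    have h := (hG τ hτ).2 x
    simp only at h
    calc G τ x - x = G τ x - (G τ x + τ • Θ (G τ x)) := by rw [h]
      _ = -(τ • Θ (G τ x)) := by abel
  have hbound : ∀ᶠ τ : ℝ in nhds 0,
      ‖τ - 0‖⁻¹ * ‖G τ x - G 0 x - (τ - 0) • (-Θ x)‖ ≤ (L : ℝ) * B * |τ| := by
    have hnb : ∀ᶠ τ : ℝ in nhds 0, |τ| * L < 1 := by
      have : Continuous fun τ : ℝ => |τ| * (L : ℝ) := by continuity
      have := this.tendsto 0
      simp only [abs_zero, zero_mul] at this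
      exact this.eventually_lt_const one_pos
    filter_upwards [hnb] with τ hτ
    rcases eq_or_ne τ 0 with rfl | hτ0
    · simp
    have hk := key τ hτ
    have h1 : G τ x - G 0 x - (τ - 0) • (-Θ x) = τ • (Θ x - Θ (G τ x)) := by
      rw [hG0, sub_zero, smul_neg, sub_neg_eq_add, hk, smul_sub]
      abel
    rw [h1, norm_smul, sub_zero, Real.norm_eq_abs]
    rw [inv_mul_le_iff₀ (abs_pos.2 hτ0)]
    have h2 : ‖Θ x - Θ (G τ x)‖ ≤ (L : ℝ) * ‖x - G τ x‖ := hΘ.norm_sub_le x (G τ x)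
    have h3 : ‖x - G τ x‖ = |τ| * ‖Θ (G τ x)‖ := by
      have h4 : x - G τ x = τ • Θ (G τ x) := by
        rw [← neg_sub, hk, neg_neg]
      rw [h4, norm_smul, Real.norm_eq_abs]
    have hB0 : ‖Θ (G τ x)‖ ≤ B := hB _
    calc |τ| * ‖Θ x - Θ (G τ x)‖ ≤ |τ| * ((L : ℝ) * (|τ| * ‖Θ (G τ x)‖)) := by
          rw [← h3]; exact mul_le_mul_of_nonneg_left h2 (abs_nonneg τ)
      _ ≤ |τ| * ((L : ℝ) * (|τ| * B)) := by
          have : (L : ℝ) * (|τ| * ‖Θ (G τ x)‖) ≤ (L : ℝ) * (|τ| * B) := by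
            apply mul_le_mul_of_nonneg_left _ L.coe_nonneg
            exact mul_le_mul_of_nonneg_left hB0 (abs_nonneg τ)
          exact mul_le_mul_of_nonneg_left this (abs_nonneg τ)
      _ = |τ| * ((L : ℝ) * B * |τ|) := by ring
  have hlim : Filter.Tendsto (fun τ : ℝ => (L : ℝ) * B * |τ|) (nhds 0) (nhds 0) := by
    have : Continuous fun τ : ℝ => (L : ℝ) * B * |τ| := by continuity
    simpa using this.tendsto 0
  refine squeeze_zero' ?_ hbound hlim
  filter_upwards with τ
  positivity
end

section
/- Let d ≥ 1, let U ⊆ ℝ^d be an open set, let u, v : U → ℝ be twice continuously differentiable, and let Θ : U → ℝ^d be differentiable on U. Define the vector field V : U → ℝ^d by V(x) = ⟨Θ(x),∇v(x)⟩·∇u(x) + ⟨Θ(x),∇u(x)⟩·∇v(x) − ⟨∇u(x),∇v(x)⟩·Θ(x). Then V is differentiable on U and for every x ∈ U: (div Θ(x))·⟨∇u(x),∇v(x)⟩ − ⟨DΘ(x)∇u(x), ∇v(x)⟩ − ⟨∇u(x), DΘ(x)∇v(x)⟩ = Δu(x)·⟨Θ(x),∇v(x)⟩ + Δv(x)·⟨Θ(x),∇u(x)⟩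 − div V(x). -/
/-!
Expanding `div V` with the product rule `div (φ W) = φ div W + Dφ(W)` for each of the three
terms of `V`, and `D⟪f, g⟫ = ⟪Df ·, g⟫ + ⟪f, Dg ·⟫` for their coefficients, leaves the claimed
terms plus four second-order terms `⟪D∇u ·, ·⟫`, `⟪D∇v ·, ·⟫`, which cancel in pairs because the
Hessians of the `C²` functions `u` and `v` are symmetric.
-/

open scoped RealInnerProductSpace

/-- The divergence `div W(x) = trace (DW(x))` of a vector field `W : ℝ^d → ℝ^d`. -/
noncomputable def vdiv {d : ℕ} (W : EuclideanSpace ℝ (Fin d) → EuclideanSpace ℝ (Fin d))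
    (x : EuclideanSpace ℝ (Fin d)) : ℝ :=
  LinearMap.trace ℝ (EuclideanSpace ℝ (Fin d))
    ((fderiv ℝ W x : EuclideanSpace ℝ (Fin d) →ₗ[ℝ] EuclideanSpace ℝ (Fin d)))

/-- The Laplacian `Δu(x) = div (∇u)(x)` (the trace of the Hessian) of `u : ℝ^d → ℝ`. -/
noncomputable def lap {d : ℕ} (u : EuclideanSpace ℝ (Fin d) → ℝ)
    (x : EuclideanSpace ℝ (Fin d)) : ℝ :=
  vdiv (gradient u) x

open InnerProductSpace

section Gradient

variable {F : Type*} [NormedAddCommGroup F] [InnerProductSpace ℝ F] [CompleteSpace F]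
  {u : F → ℝ} {x : F}

theorem gradient_eq_toDual_symm_comp_fderiv : gradient u = (toDual ℝ F).symm ∘ fderiv ℝ u := rfl

theorem ContDiffAt.differentiableAt_gradient (hu : ContDiffAt ℝ 2 u x) :
    DifferentiableAt ℝ (gradient u) x := by
  rw [gradient_eq_toDual_symm_comp_fderiv, LinearIsometryEquiv.comp_differentiableAt_iff]
  exact (hu.fderiv_right le_rfl).differentiableAt one_ne_zero

theorem inner_fderiv_gradient_apply (a b : F) :
    ⟪fderiv ℝ (gradient u) x a, b⟫ = fderiv ℝ (fderiv ℝ u) x a b := by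
  rw [gradient_eq_toDual_symm_comp_fderiv, LinearIsometryEquiv.comp_fderiv]
  exact toDual_symm_apply

theorem ContDiffAt.inner_fderiv_gradient_comm (hu : ContDiffAt ℝ 2 u x) (a b : F) :
    ⟪fderiv ℝ (gradient u) x a, b⟫ = ⟪a, fderiv ℝ (gradient u) x b⟫ := by
  rw [real_inner_comm _ a, inner_fderiv_gradient_apply, inner_fderiv_gradient_apply,
    hu.isSymmSndFDerivAt (by simp)]

end Gradient

section Divergence

variable {d : ℕ} {W W₁ W₂ : EuclideanSpace ℝ (Fin d) → EuclideanSpace ℝ (Fin d)}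
  {φ : EuclideanSpace ℝ (Fin d) → ℝ} {x : EuclideanSpace ℝ (Fin d)}

theorem vdiv_add (h₁ : DifferentiableAt ℝ W₁ x) (h₂ : DifferentiableAt ℝ W₂ x) :
    vdiv (fun y => W₁ y + W₂ y) x = vdiv W₁ x + vdiv W₂ x := by
  simp only [vdiv, fderiv_fun_add h₁ h₂, ContinuousLinearMap.toLinearMap_add, map_add]

theorem vdiv_sub (h₁ : DifferentiableAt ℝ W₁ x) (h₂ : DifferentiableAt ℝ W₂ x) :
    vdiv (fun y => W₁ y - W₂ y) x = vdiv W₁ x - vdiv W₂ x := by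
  simp only [vdiv, fderiv_fun_sub h₁ h₂, ContinuousLinearMap.toLinearMap_sub, map_sub]

theorem vdiv_smul (hφ : DifferentiableAt ℝ φ x) (hW : DifferentiableAt ℝ W x) :
    vdiv (fun y => φ y • W y) x = φ x * vdiv W x + fderiv ℝ φ x (W x) := by
  simp only [vdiv, fderiv_fun_smul hφ hW, ContinuousLinearMap.toLinearMap_add,
    ContinuousLinearMap.toLinearMap_smul, map_add, map_smul, smul_eq_mul]
  congr 1
  exact LinearMap.trace_smulRight _ _

end Divergence

section ShapeField

variable {d : ℕ} {u v : EuclideanSpace ℝ (Fin d) → ℝ}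
  {Θ : EuclideanSpace ℝ (Fin d) → EuclideanSpace ℝ (Fin d)} {x : EuclideanSpace ℝ (Fin d)}

noncomputable def shapeField (Θ : EuclideanSpace ℝ (Fin d) → EuclideanSpace ℝ (Fin d))
    (u v : EuclideanSpace ℝ (Fin d) → ℝ) (x : EuclideanSpace ℝ (Fin d)) :
    EuclideanSpace ℝ (Fin d) :=
  ⟪Θ x, gradient v x⟫ • gradient u x + ⟪Θ x, gradient u x⟫ • gradient v x
    - ⟪gradient u x, gradient v x⟫ • Θ x

theorem differentiableAt_shapeField (hΘ : DifferentiableAt ℝ Θ x)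
    (hu : DifferentiableAt ℝ (gradient u) x) (hv : DifferentiableAt ℝ (gradient v) x) :
    DifferentiableAt ℝ (shapeField Θ u v) x :=
  (((hΘ.inner ℝ hv).fun_smul hu).fun_add ((hΘ.inner ℝ hu).fun_smul hv)).fun_sub
    ((hu.inner ℝ hv).fun_smul hΘ)

theorem vdiv_shapeField (hΘ : DifferentiableAt ℝ Θ x)
    (hu : ContDiffAt ℝ 2 u x) (hv : ContDiffAt ℝ 2 v x) :
    vdiv (shapeField Θ u v) x =
      lap u x * ⟪Θ x, gradient v x⟫ + lap v x * ⟪Θ x, gradient u x⟫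
        - (vdiv Θ x * ⟪gradient u x, gradient v x⟫
          - ⟪fderiv ℝ Θ x (gradient u x), gradient v x⟫
          - ⟪gradient u x, fderiv ℝ Θ x (gradient v x)⟫) := by
  have hgu := hu.differentiableAt_gradient
  have hgv := hv.differentiableAt_gradient
  have h₁ := (hΘ.inner ℝ hgv).fun_smul hgu
  have h₂ := (hΘ.inner ℝ hgu).fun_smul hgv
  have h₃ := (hgu.inner ℝ hgv).fun_smul hΘ
  unfold shapeField
  rw [vdiv_sub (h₁.fun_add h₂) h₃, vdiv_add h₁ h₂, vdiv_smul (hΘ.inner ℝ hgv) hgu,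
    vdiv_smul (hΘ.inner ℝ hgu) hgv, vdiv_smul (hgu.inner ℝ hgv) hΘ,
    fderiv_inner_apply ℝ hΘ hgv, fderiv_inner_apply ℝ hΘ hgu, fderiv_inner_apply ℝ hgu hgv,
    lap, lap]
  linarith [hu.inner_fderiv_gradient_comm (Θ x) (gradient v x),
    hv.inner_fderiv_gradient_comm (Θ x) (gradient u x),
    real_inner_comm (gradient u x) (fderiv ℝ (gradient v) x (Θ x)),
    real_inner_comm (gradient u x) (gradient v x),
    real_inner_comm (gradient u x) (fderiv ℝ Θ x (gradient v x))]

end ShapeField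

theorem pointwise_divergence_identity_for_shape_derivative_general
    (d : ℕ)
    (U : Set (EuclideanSpace ℝ (Fin d))) (hU : IsOpen U)
    (u v : EuclideanSpace ℝ (Fin d) → ℝ)
    (hu : ContDiffOn ℝ 2 u U) (hv : ContDiffOn ℝ 2 v U)
    (Θ : EuclideanSpace ℝ (Fin d) → EuclideanSpace ℝ (Fin d))
    (hΘ : DifferentiableOn ℝ Θ U)
    (V : EuclideanSpace ℝ (Fin d) → EuclideanSpace ℝ (Fin d))
    (hV : ∀ x, V x = ⟪Θ x, gradient v x⟫ • gradient u x + ⟪Θ x, gradient u x⟫ • gradient v x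
        - ⟪gradient u x, gradient v x⟫ • Θ x) :
    DifferentiableOn ℝ V U ∧
    ∀ x ∈ U,
      vdiv Θ x * ⟪gradient u x, gradient v x⟫
          - ⟪fderiv ℝ Θ x (gradient u x), gradient v x⟫
          - ⟪gradient u x, fderiv ℝ Θ x (gradient v x)⟫ =
        lap u x * ⟪Θ x, gradient v x⟫ + lap v x * ⟪Θ x, gradient u x⟫ - vdiv V x := by
  obtain rfl : V = shapeField Θ u v := funext hV
  have hux (x) (hx : x ∈ U) : ContDiffAt ℝ 2 u x := hu.contDiffAt (hU.mem_nhds hx)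
  have hvx (x) (hx : x ∈ U) : ContDiffAt ℝ 2 v x := hv.contDiffAt (hU.mem_nhds hx)
  have hΘx (x) (hx : x ∈ U) : DifferentiableAt ℝ Θ x := hΘ.differentiableAt (hU.mem_nhds hx)
  refine ⟨fun x hx => ?_, fun x hx => ?_⟩
  · exact (differentiableAt_shapeField (hΘx x hx) (hux x hx).differentiableAt_gradient
      (hvx x hx).differentiableAt_gradient).differentiableWithinAt
  · rw [vdiv_shapeField (hΘx x hx) (hux x hx) (hvx x hx)]
    ring

/-- For `u, v` twice continuously differentiable and `Θ` differentiable on an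
open set `U ⊆ ℝ^d`, the vector field
`V = ⟨Θ,∇v⟩∇u + ⟨Θ,∇u⟩∇v − ⟨∇u,∇v⟩Θ` is differentiable on `U` and satisfies the pointwise
divergence identity
`(div Θ)⟨∇u,∇v⟩ − ⟨DΘ∇u,∇v⟩ − ⟨∇u,DΘ∇v⟩ = Δu ⟨Θ,∇v⟩ + Δv ⟨Θ,∇u⟩ − div V` on `U`. -/
theorem pointwise_divergence_identity_for_shape_derivative
    (d : ℕ) (hd : 1 ≤ d)
    (U : Set (EuclideanSpace ℝ (Fin d))) (hU : IsOpen U)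
    (u v : EuclideanSpace ℝ (Fin d) → ℝ)
    (hu : ContDiffOn ℝ 2 u U) (hv : ContDiffOn ℝ 2 v U)
    (Θ : EuclideanSpace ℝ (Fin d) → EuclideanSpace ℝ (Fin d))
    (hΘ : DifferentiableOn ℝ Θ U)
    (V : EuclideanSpace ℝ (Fin d) → EuclideanSpace ℝ (Fin d))
    (hV : ∀ x, V x = ⟪Θ x, gradient v x⟫ • gradient u x + ⟪Θ x, gradient u x⟫ • gradient v x
        - ⟪gradient u x, gradient v x⟫ • Θ x) :
    DifferentiableOn ℝ V U ∧
    ∀ x ∈ U,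
      vdiv Θ x * ⟪gradient u x, gradient v x⟫
          - ⟪fderiv ℝ Θ x (gradient u x), gradient v x⟫
          - ⟪gradient u x, fderiv ℝ Θ x (gradient v x)⟫ =
        lap u x * ⟪Θ x, gradient v x⟫ + lap v x * ⟪Θ x, gradient u x⟫ - vdiv V x :=
  pointwise_divergence_identity_for_shape_derivative_general d U hU u v hu hv Θ hΘ V hV
end
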